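/- There is a well-defined group homomorphism π : L(6,3,2) → L(2,2,2,2) with π(u1) = x4, π(u2) = c, π(u3) = x1 + x2 + x3 (where c is the canonical element of L(2,2,2,2)), and its kernel is the cyclic group of order 3 generated by 4u1 + u2 - c', where c' is the canonical element of L(6,3,2). -/

import Mathlib

/-- Relations subgroup for the string group of weight type `p`:
generated by the elements `p i • x i - p 0 • x 0`. -/
noncomputable def stringRels (t : ℕ) (p : Fin (t + 1) → ℕ) :
    AddSubgroup (Fin (t + 1) →₀ ℤ) :=
  AddSubgroup.closure (Set.range fun i : Fin (t + 1) =>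
    Finsupp.single i (p i : ℤ) - Finsupp.single 0 (p 0 : ℤ))

/-- The string group `L(p)`. -/
abbrev StringGroup (t : ℕ) (p : Fin (t + 1) → ℕ) :=
  (Fin (t + 1) →₀ ℤ) ⧸ stringRels t p

/-- The generator `x_i` of the string group. -/
noncomputable def gen (t : ℕ) (p : Fin (t + 1) → ℕ) (i : Fin (t + 1)) :
    StringGroup t p :=
  QuotientAddGroup.mk (Finsupp.single i 1)

/-- The canonical element `c = p_i • x_i` of the string group. -/
noncomputable def can (t : ℕ) (p : Fin (t + 1) → ℕ) : StringGroup t p :=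
  (p 0 : ℤ) • gen t p 0

/-!
Write `k = 4u₁ + u₂ - c' = u₂ - 2u₁` (in the code `uᵢ` is `u (i - 1)` and `xᵢ` is `x (i - 1)`).
Since `2u₃ = 6u₁`, the assignment `x₁, x₂, x₄ ↦ u₁`, `x₃ ↦ u₃ - 2u₁` respects `2xᵢ = 2u₁` and
defines `σ : L(2,2,2,2) → L(6,3,2)` with `g - σ (π g) ∈ ⟨k⟩` for all `g`: on generators this
difference is `0` or `k`. Hence `ker π ⊆ ⟨k⟩`, and `π k = c - 2x₄ = 0` gives equality.
Finally `3k = 3u₂ - 6u₁ = 0`, while `k ≠ 0` because the character `L(6,3,2) → ℤ/3` sending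
`u₂ ↦ 1`, `u₁, u₃ ↦ 0` takes the value `1` on it.
-/

theorem AddMonoidHom.ker_eq_of_sub_comp_mem {G N : Type*} [AddGroup G] [AddGroup N]
    {H : AddSubgroup G} {π : G →+ N} (σ : N →+ G) (hσ : ∀ g, g - σ (π g) ∈ H)
    (hH : H ≤ π.ker) : π.ker = H := by
  refine le_antisymm (fun g hg => ?_) hH
  simpa [π.mem_ker.mp hg] using hσ g

namespace StringGroup

variable {t : ℕ} {p : Fin (t + 1) → ℕ} {N : Type*} [AddCommGroup N]

theorem zsmul_gen (i : Fin (t + 1)) : (p i : ℤ) • gen t p i = can t p := by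
  rw [can, gen, gen, ← QuotientAddGroup.mk_zsmul, ← QuotientAddGroup.mk_zsmul,
    QuotientAddGroup.eq_iff_sub_mem, Finsupp.smul_single_one, Finsupp.smul_single_one]
  exact AddSubgroup.subset_closure ⟨i, rfl⟩

noncomputable def lift (g : Fin (t + 1) → N) (h : ∀ i, (p i : ℤ) • g i = (p 0 : ℤ) • g 0) :
    StringGroup t p →+ N :=
  QuotientAddGroup.lift _ (Finsupp.liftAddHom fun i => zmultiplesHom N (g i)) <| by
    rw [stringRels, AddSubgroup.closure_le]
    rintro _ ⟨i, rfl⟩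
    simp only [SetLike.mem_coe, AddMonoidHom.mem_ker, map_sub, Finsupp.liftAddHom_apply_single,
      zmultiplesHom_apply, h i, sub_self]

@[simp]
theorem lift_gen (g : Fin (t + 1) → N) (h : ∀ i, (p i : ℤ) • g i = (p 0 : ℤ) • g 0)
    (i : Fin (t + 1)) : lift g h (gen t p i) = g i := by
  simp [lift, gen]

theorem hom_ext {f g : StringGroup t p →+ N} (h : ∀ i, f (gen t p i) = g (gen t p i)) :
    f = g :=
  QuotientAddGroup.addMonoidHom_ext _ <| Finsupp.addHom_ext' fun i => AddMonoidHom.ext_int (h i)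

theorem map_mem_of_forall_gen_mem (f : StringGroup t p →+ N) {H : AddSubgroup N}
    (hf : ∀ i, f (gen t p i) ∈ H) (g : StringGroup t p) : f g ∈ H := by
  have : (QuotientAddGroup.mk' H).comp f = 0 :=
    hom_ext fun i => (QuotientAddGroup.eq_zero_iff _).mpr (hf i)
  exact (QuotientAddGroup.eq_zero_iff _).mp (DFunLike.congr_fun this g)

end StringGroup

section

local notation "L" => StringGroup 2 ![6, 3, 2]
local notation "M" => StringGroup 3 ![2, 2, 2, 2]
local notation "u" => gen 2 ![6, 3, 2]
local notation "x" => gen 3 ![2, 2, 2, 2]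

theorem two_zsmul_gen_eq_can (i : Fin 4) : (2 : ℤ) • x i = can 3 ![2, 2, 2, 2] := by
  fin_cases i <;> exact StringGroup.zsmul_gen _

noncomputable def projection : L →+ M :=
  StringGroup.lift ![x 3, can 3 ![2, 2, 2, 2], x 0 + x 1 + x 2] <| by
    have h := two_zsmul_gen_eq_can
    intro i
    fin_cases i
    · rfl
    · change (3 : ℤ) • can 3 ![2, 2, 2, 2] = (6 : ℤ) • x 3
      linear_combination (norm := module) (-3 : ℤ) • h 3
    · change (2 : ℤ) • (x 0 + x 1 + x 2) = (6 : ℤ) • x 3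
      linear_combination (norm := module) h 0 + h 1 + h 2 - 3 • h 3

noncomputable def kernelGen : L :=
  (4 : ℤ) • u 0 + u 1 - can 2 ![6, 3, 2]

theorem kernelGen_eq : kernelGen = u 1 - (2 : ℤ) • u 0 := by
  change (4 : ℤ) • u 0 + u 1 - (6 : ℤ) • u 0 = _
  module

@[simp]
theorem projection_gen (i : Fin 3) :
    projection (u i) = ![x 3, can 3 ![2, 2, 2, 2], x 0 + x 1 + x 2] i :=
  StringGroup.lift_gen _ _ i

theorem projection_kernelGen : projection kernelGen = 0 := by
  simp [kernelGen_eq, ← two_zsmul_gen_eq_can 3]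

theorem three_smul_kernelGen : 3 • kernelGen = 0 := by
  have h1 : (3 : ℤ) • u 1 = can 2 ![6, 3, 2] := StringGroup.zsmul_gen 1
  have h0 : (6 : ℤ) • u 0 = can 2 ![6, 3, 2] := StringGroup.zsmul_gen 0
  rw [kernelGen_eq]
  linear_combination (norm := module) h1 - h0

theorem kernelGen_ne_zero : kernelGen ≠ 0 := by
  let χ : L →+ ZMod 3 := StringGroup.lift ![0, 1, 0] (by intro i; fin_cases i <;> decide)
  intro h
  simpa [χ, kernelGen_eq] using congrArg χ h

theorem addOrderOf_kernelGen : addOrderOf kernelGen = 3 :=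
  addOrderOf_eq_prime three_smul_kernelGen kernelGen_ne_zero

noncomputable def retraction : M →+ L :=
  StringGroup.lift ![u 0, u 0, u 2 - (2 : ℤ) • u 0, u 0] <| by
    have h : (2 : ℤ) • u 2 = (6 : ℤ) • u 0 :=
      (StringGroup.zsmul_gen 2).trans (StringGroup.zsmul_gen 0).symm
    intro i
    fin_cases i
    · rfl
    · rfl
    · change (2 : ℤ) • (u 2 - (2 : ℤ) • u 0) = (2 : ℤ) • u 0
      linear_combination (norm := module) h
    · rfl

@[simp]
theorem retraction_gen (i : Fin 4) :
    retraction (x i) = ![u 0, u 0, u 2 - (2 : ℤ) • u 0, u 0] i :=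
  StringGroup.lift_gen _ _ i

theorem sub_retraction_projection_mem (g : L) :
    g - retraction (projection g) ∈ AddSubgroup.zmultiples kernelGen := by
  refine StringGroup.map_mem_of_forall_gen_mem (AddMonoidHom.id L - retraction.comp projection)
    (fun i => ?_) g
  fin_cases i
  · simp
  · simp [← two_zsmul_gen_eq_can 3, ← kernelGen_eq]
  · convert zero_mem (AddSubgroup.zmultiples kernelGen) using 1
    simp only [Fin.reduceFinMk, AddMonoidHom.sub_apply, AddMonoidHom.id_apply,
      AddMonoidHom.comp_apply, projection_gen, map_add, retraction_gen, Matrix.cons_val]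
    module

theorem ker_projection : projection.ker = AddSubgroup.zmultiples kernelGen :=
  projection.ker_eq_of_sub_comp_mem retraction sub_retraction_projection_mem <|
    AddSubgroup.zmultiples_le_of_mem (projection.mem_ker.mpr projection_kernelGen)

end

theorem stmt_15 :
    ∃ π : StringGroup 2 ![6, 3, 2] →+ StringGroup 3 ![2, 2, 2, 2],
      π (gen 2 ![6, 3, 2] 0) = gen 3 ![2, 2, 2, 2] 3 ∧
      π (gen 2 ![6, 3, 2] 1) = can 3 ![2, 2, 2, 2] ∧
      π (gen 2 ![6, 3, 2] 2) =
        gen 3 ![2, 2, 2, 2] 0 + gen 3 ![2, 2, 2, 2] 1 + gen 3 ![2, 2, 2, 2] 2 ∧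
      π.ker = AddSubgroup.zmultiples
        ((4 : ℤ) • gen 2 ![6, 3, 2] 0 + gen 2 ![6, 3, 2] 1 - can 2 ![6, 3, 2]) ∧
      addOrderOf
        ((4 : ℤ) • gen 2 ![6, 3, 2] 0 + gen 2 ![6, 3, 2] 1 - can 2 ![6, 3, 2]) = 3 :=
  ⟨projection, projection_gen 0, projection_gen 1, projection_gen 2, ker_projection,
    addOrderOf_kernelGen⟩
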